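/- arXiv:2603.07407 — 3 statements merged into one kernel-verified Lean document; each statement's English description precedes it below -/
import Mathlib

section
/- Let Γ ⊆ ℝ be a closed ray [x₀, ∞) and let f : Γ → ℂ be continuously differentiable with f ∈ L²(Γ) and with derivative bounded by C = sup_{x ∈ Γ} |f'(x)| < ∞. Then for every t ∈ Γ we have |f(t)| ≤ 3^{1/3} · ‖f‖_{L²(Γ)}^{2/3} · C^{1/3}. -/
open MeasureTheory Set

/-!
If `‖f t‖ = M`, the bound `‖f'‖ ≤ C` keeps `‖f‖ ≥ M - C (s - t)` on the interval `[t, t + M / C]`,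
so `‖f‖²` has integral at least `∫ (M - C (s - t))² = M³ / (3 C)` there. Hence `M³ ≤ 3 C ‖f‖²_{L²}`,
which is the claim after taking cube roots.
-/

theorem integral_sq_sub_mul_sub {M C t : ℝ} (hC : C ≠ 0) :
    ∫ x in t..t + M / C, (M - C * (x - t)) ^ 2 = M ^ 3 / (3 * C) := by
  have hderiv : ∀ x ∈ uIcc t (t + M / C),
      HasDerivAt (fun x => -(M - C * (x - t)) ^ 3 / (3 * C)) ((M - C * (x - t)) ^ 2) x := by
    intro x _
    have hlin : HasDerivAt (fun x => M - C * (x - t)) (-C) x := by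
      simpa using (((hasDerivAt_id x).sub_const t).const_mul C).const_sub M
    refine ((hlin.fun_pow 3).fun_neg.div_const (3 * C)).congr_deriv ?_
    field_simp
    ring
  rw [intervalIntegral.integral_eq_sub_of_hasDerivAt hderiv
    (Continuous.intervalIntegrable (by fun_prop) _ _)]
  field_simp
  ring

section

variable {E : Type*} [NormedAddCommGroup E] {f : ℝ → E} {t C : ℝ}

theorem norm_pow_three_le_three_mul_integral_of_pos (hC : 0 < C)
    (hf : ∀ y ∈ Ici t, ‖f y - f t‖ ≤ C * (y - t))
    (hint : IntegrableOn (fun x => ‖f x‖ ^ 2) (Ici t)) :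
    ‖f t‖ ^ 3 ≤ 3 * C * ∫ x in Ici t, ‖f x‖ ^ 2 := by
  set M := ‖f t‖
  have hsub : Ioc t (t + M / C) ⊆ Ici t := Ioc_subset_Icc_self.trans Icc_subset_Ici_self
  have hlower : ∀ s ∈ Ioc t (t + M / C), (M - C * (s - t)) ^ 2 ≤ ‖f s‖ ^ 2 := by
    intro s hs
    have hpos : 0 ≤ M - C * (s - t) := by
      have := mul_le_mul_of_nonneg_left (sub_le_iff_le_add'.2 hs.2) hC.le
      rw [mul_div_cancel₀ M hC.ne'] at this
      linarith
    have hle : M - C * (s - t) ≤ ‖f s‖ := by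
      linarith [norm_sub_norm_le (f t) (f s), norm_sub_rev (f t) (f s), hf s (hsub hs)]
    exact pow_le_pow_left₀ hpos hle 2
  have hmodel : M ^ 3 / (3 * C) ≤ ∫ x in Ici t, ‖f x‖ ^ 2 :=
    calc M ^ 3 / (3 * C) = ∫ x in Ioc t (t + M / C), (M - C * (x - t)) ^ 2 := by
          rw [← integral_sq_sub_mul_sub hC.ne',
            intervalIntegral.integral_of_le (by simp only [le_add_iff_nonneg_right]; positivity)]
      _ ≤ ∫ x in Ioc t (t + M / C), ‖f x‖ ^ 2 :=
          setIntegral_mono_on (Continuous.integrableOn_Ioc (by fun_prop)) (hint.mono_set hsub)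
            measurableSet_Ioc hlower
      _ ≤ ∫ x in Ici t, ‖f x‖ ^ 2 :=
          setIntegral_mono_set hint (.of_forall fun _ => by positivity) hsub.eventuallyLE
  rwa [div_le_iff₀ (by positivity), mul_comm] at hmodel

/-- For `C = 0`, apply the positive case to every `c > C` and let `c` tend to `C`. -/
theorem norm_pow_three_le_three_mul_integral (hC : 0 ≤ C)
    (hf : ∀ y ∈ Ici t, ‖f y - f t‖ ≤ C * (y - t))
    (hint : IntegrableOn (fun x => ‖f x‖ ^ 2) (Ici t)) :
    ‖f t‖ ^ 3 ≤ 3 * C * ∫ x in Ici t, ‖f x‖ ^ 2 := by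
  refine ge_of_tendsto (x := nhdsWithin C (Ioi C))
    ((Continuous.tendsto (by fun_prop) C).mono_left nhdsWithin_le_nhds)
    (eventually_nhdsWithin_of_forall fun c (hc : C < c) =>
      norm_pow_three_le_three_mul_integral_of_pos (hC.trans_lt hc)
        (fun y hy => (hf y hy).trans ?_) hint)
  exact mul_le_mul_of_nonneg_right hc.le (sub_nonneg.2 hy)

end

theorem stmt_0_general (x₀ : ℝ) (f f' : ℝ → ℂ) (C : ℝ)
    (hderiv : ∀ x ∈ Ici x₀, HasDerivWithinAt f (f' x) (Ici x₀) x)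
    (hC : ∀ x ∈ Ici x₀, ‖f' x‖ ≤ C)
    (hL2 : IntegrableOn (fun x => ‖f x‖ ^ 2) (Ici x₀)) :
    ∀ t ∈ Ici x₀,
      ‖f t‖ ≤ (3 : ℝ) ^ ((1 : ℝ) / 3) *
        ((∫ x in Ici x₀, ‖f x‖ ^ 2) ^ ((1 : ℝ) / 2)) ^ ((2 : ℝ) / 3) *
        C ^ ((1 : ℝ) / 3) := by
  intro t ht
  set I := ∫ x in Ici x₀, ‖f x‖ ^ 2
  have hC0 : 0 ≤ C := (norm_nonneg _).trans (hC t ht)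
  have hI0 : 0 ≤ I := setIntegral_nonneg measurableSet_Ici fun _ _ => by positivity
  have hsub : Ici t ⊆ Ici x₀ := Ici_subset_Ici.2 ht
  have hlip : ∀ y ∈ Ici t, ‖f y - f t‖ ≤ C * (y - t) := fun y hy => by
    have := (convex_Ici x₀).norm_image_sub_le_of_norm_hasDerivWithin_le hderiv hC ht (hsub hy)
    rwa [Real.norm_of_nonneg (sub_nonneg.2 hy)] at this
  have hcube : ‖f t‖ ^ 3 ≤ 3 * I * C :=
    calc ‖f t‖ ^ 3 ≤ 3 * C * ∫ x in Ici t, ‖f x‖ ^ 2 :=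
          norm_pow_three_le_three_mul_integral hC0 hlip (hL2.mono_set hsub)
      _ ≤ 3 * C * I := by
          gcongr
          exact setIntegral_mono_set hL2 (.of_forall fun _ => by positivity) hsub.eventuallyLE
      _ = 3 * I * C := by ring
  calc ‖f t‖ ≤ (3 * I * C) ^ ((3 : ℝ)⁻¹) :=
        (Real.le_rpow_inv_iff_of_pos (norm_nonneg _) (by positivity) (by norm_num)).2
          (by exact_mod_cast hcube)
    _ = _ := by
        rw [Real.mul_rpow (by positivity) hC0, Real.mul_rpow (by norm_num) hI0,
          ← Real.rpow_mul hI0]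
        norm_num

/-- Landau–Kolmogorov type bound on a ray: if `f` is C¹ on `[x₀, ∞)`, square
integrable there, with derivative bounded by `C`, then
`|f t| ≤ 3^(1/3) ‖f‖_{L²}^(2/3) C^(1/3)`. -/
theorem stmt_0 (x₀ : ℝ) (f f' : ℝ → ℂ) (C : ℝ)
    (hderiv : ∀ x ∈ Ici x₀, HasDerivWithinAt f (f' x) (Ici x₀) x)
    (hcont : ContinuousOn f' (Ici x₀))
    (hC : ∀ x ∈ Ici x₀, ‖f' x‖ ≤ C)
    (hL2 : IntegrableOn (fun x => ‖f x‖ ^ 2) (Ici x₀)) :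
    ∀ t ∈ Ici x₀,
      ‖f t‖ ≤ (3 : ℝ) ^ ((1 : ℝ) / 3) *
        ((∫ x in Ici x₀, ‖f x‖ ^ 2) ^ ((1 : ℝ) / 2)) ^ ((2 : ℝ) / 3) *
        C ^ ((1 : ℝ) / 3) :=
  stmt_0_general x₀ f f' C hderiv hC hL2
end

section
/- For every integer k ≥ 0 and every real R ≥ 1, ∫_{|z| > √(k/π) + R} √(π^k/k!) · |z|^k · e^{−(π/2)|z|²} dz ≤ (2 + 2√k) e^{−πR²/2}, where the integral is over the complex plane with Lebesgue measure. -/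
/-!
Put `a = √(k/π)`. From `x ^ k ≤ k ^ k e^{x-k}` and `k ^ k / k! ≤ e ^ k` one gets
`g(r) := √(π^k/k!) r^k e^{-πr²/2} ≤ e^{-π(r-a)²/2}`: the normalised monomial is dominated
by a Gaussian centred at its peak radius `a`. In polar coordinates the integral is
`2π ∫_{r > a+R} r g(r) dr`, and for `r - a ≥ R ≥ 1` we have `r ≤ (1 + a)(r - a)`, which
turns the dominating Gaussian into the exact derivative of `-e^{-π(r-a)²/2}/π`. This gives
`2(1 + a) e^{-πR²/2}`, and `a ≤ √k`.
-/

open MeasureTheory Real Set Filter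
open scoped Nat

lemma pow_le_pow_mul_exp_sub {x : ℝ} (hx : 0 ≤ x) (k : ℕ) :
    x ^ k ≤ (k : ℝ) ^ k * exp (x - k) := by
  rcases k.eq_zero_or_pos with rfl | hk
  · simpa using hx
  have hk' : (0 : ℝ) < k := by exact_mod_cast hk
  calc x ^ k = (k : ℝ) ^ k * (x / k) ^ k := by rw [← mul_pow, mul_div_cancel₀ _ hk'.ne']
    _ ≤ (k : ℝ) ^ k * exp (x / k - 1) ^ k := by
        gcongr
        linarith [add_one_le_exp (x / k - 1)]
    _ = (k : ℝ) ^ k * exp (x - k) := by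
        rw [← exp_nat_mul]
        field_simp

lemma pow_two_mul_div_factorial_le_exp {y : ℝ} (hy : 0 ≤ y) (k : ℕ) :
    y ^ (2 * k) / k ! ≤ exp (y ^ 2 - (y - √k) ^ 2) := by
  rcases k.eq_zero_or_pos with rfl | hk
  · simp
  have hsq : √(k : ℝ) ^ 2 = k := sq_sqrt k.cast_nonneg
  have hyk : y ^ k ≤ √k ^ k * exp (√k * y - k) := by
    have h := pow_le_pow_mul_exp_sub (mul_nonneg (sqrt_nonneg k) hy) k
    rw [mul_pow, ← hsq, ← pow_mul, two_mul, pow_add, mul_assoc, hsq] at h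
    exact le_of_mul_le_mul_left h (by positivity)
  calc y ^ (2 * k) / k ! = (y ^ k) ^ 2 / k ! := by ring
    _ ≤ (√k ^ k * exp (√k * y - k)) ^ 2 / k ! := by gcongr
    _ = (k : ℝ) ^ k / k ! * exp (2 * √k * y - 2 * k) := by
        rw [mul_pow, ← pow_mul, mul_comm k 2, pow_mul, hsq, ← exp_nat_mul]
        ring_nf
    _ ≤ exp k * exp (2 * √k * y - 2 * k) := by
        gcongr
        exact pow_div_factorial_le_exp _ k.cast_nonneg k
    _ = exp (y ^ 2 - (y - √k) ^ 2) := by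
        rw [← exp_add]
        congr 1
        linear_combination hsq

lemma sqrt_pow_div_factorial_mul_pow_mul_exp_le {α r : ℝ} (hα : 0 < α) (hr : 0 ≤ r)
    (k : ℕ) :
    √(α ^ k / k !) * r ^ k * exp (-(α / 2) * r ^ 2) ≤
      exp (-(α / 2) * (r - √(k / α)) ^ 2) := by
  have hsα : √α ^ 2 = α := sq_sqrt hα.le
  have hlhs : √(α ^ k / k !) * r ^ k = √((√α * r) ^ (2 * k) / k !) := by
    rw [mul_pow, pow_mul, hsα, mul_div_right_comm, sqrt_mul (by positivity), pow_mul',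
      sqrt_sq (by positivity)]
  have hdiff : √α * r - √k = √α * (r - √(k / α)) := by
    rw [sqrt_div' _ hα.le, mul_sub, mul_div_cancel₀ _ (sqrt_pos.2 hα).ne']
  calc √(α ^ k / k !) * r ^ k * exp (-(α / 2) * r ^ 2)
      ≤ √(exp ((√α * r) ^ 2 - (√α * r - √k) ^ 2)) * exp (-(α / 2) * r ^ 2) := by
        rw [hlhs]
        gcongr
        exact pow_two_mul_div_factorial_le_exp (by positivity) k
    _ = exp (-(α / 2) * (r - √(k / α)) ^ 2) := by
        rw [← exp_half, ← exp_add, hdiff]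
        congr 1
        linear_combination (r ^ 2 / 2 - (r - √(k / α)) ^ 2 / 2) * hsα

lemma integral_Ioi_sub_mul_exp_neg_mul_sq {b : ℝ} (hb : 0 < b) (a c : ℝ) :
    ∫ r in Ioi c, (r - a) * exp (-b * (r - a) ^ 2) = exp (-b * (c - a) ^ 2) / (2 * b) := by
  have hderiv : ∀ x ∈ Ici c, HasDerivAt (fun r => -exp (-b * (r - a) ^ 2) / (2 * b))
      ((x - a) * exp (-b * (x - a) ^ 2)) x := by
    intro x _
    refine (((((hasDerivAt_id' x).sub_const a).fun_pow 2).const_mul (-b)).exp.neg.div_const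
      (2 * b)).congr_deriv ?_
    field_simp
    ring
  have hint : IntegrableOn (fun r => (r - a) * exp (-b * (r - a) ^ 2)) (Ioi c) :=
    ((integrable_mul_exp_neg_mul_sq hb).comp_sub_right a).integrableOn
  have hlim : Tendsto (fun r => -exp (-b * (r - a) ^ 2) / (2 * b)) atTop (nhds 0) := by
    have h : Tendsto (fun r : ℝ => -b * (r - a) ^ 2) atTop atBot :=
      ((tendsto_pow_atTop two_ne_zero).comp (tendsto_atTop_add_const_right _ (-a) tendsto_id))
        |>.const_mul_atTop_of_neg (neg_neg_of_pos hb)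
    simpa using (tendsto_exp_atBot.comp h).neg.div_const (2 * b)
  rw [integral_Ioi_of_hasDerivAt_of_tendsto' hderiv hint hlim]
  ring

lemma integral_Ioi_mul_sqrt_pow_div_factorial_mul_pow_mul_exp_le {α R : ℝ} (hα : 0 < α)
    (hR : 1 ≤ R) (k : ℕ) :
    ∫ r in Ioi (√(k / α) + R), r * (√(α ^ k / k !) * r ^ k * exp (-(α / 2) * r ^ 2)) ≤
      (1 + √(k / α)) * exp (-(α / 2) * R ^ 2) / α := by
  set a := √(k / α)
  have ha : 0 ≤ a := sqrt_nonneg _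
  have hmajor : ∀ r ∈ Ioi (a + R), r * (√(α ^ k / k !) * r ^ k * exp (-(α / 2) * r ^ 2)) ≤
      (1 + a) * ((r - a) * exp (-(α / 2) * (r - a) ^ 2)) := by
    intro r hr
    have hr : 1 ≤ r - a := by linarith [mem_Ioi.1 hr]
    calc r * (√(α ^ k / k !) * r ^ k * exp (-(α / 2) * r ^ 2))
        ≤ r * exp (-(α / 2) * (r - a) ^ 2) :=
          mul_le_mul_of_nonneg_left
            (sqrt_pow_div_factorial_mul_pow_mul_exp_le hα (by linarith) k) (by linarith)
      _ ≤ (1 + a) * (r - a) * exp (-(α / 2) * (r - a) ^ 2) := by gcongr; nlinarith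
      _ = (1 + a) * ((r - a) * exp (-(α / 2) * (r - a) ^ 2)) := by ring
  have hnonneg :
      ∀ r ∈ Ioi (a + R), 0 ≤ r * (√(α ^ k / k !) * r ^ k * exp (-(α / 2) * r ^ 2)) :=
    fun r hr => by
      have : 0 < r := by linarith [mem_Ioi.1 hr]
      positivity
  calc _ ≤ ∫ r in Ioi (a + R), (1 + a) * ((r - a) * exp (-(α / 2) * (r - a) ^ 2)) :=
        integral_mono_of_nonneg ((ae_restrict_iff' measurableSet_Ioi).2 (.of_forall hnonneg))
          (((integrable_mul_exp_neg_mul_sq (by positivity)).comp_sub_right a).const_mul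
            _).integrableOn
          ((ae_restrict_iff' measurableSet_Ioi).2 (.of_forall hmajor))
    _ = (1 + a) * exp (-(α / 2) * R ^ 2) / α := by
        rw [integral_const_mul, integral_Ioi_sub_mul_exp_neg_mul_sq (by positivity),
          add_sub_cancel_left]
        field_simp

lemma setIntegral_norm_gt_eq_two_pi_mul (f : ℝ → ℝ) {c : ℝ} (hc : 0 ≤ c) :
    ∫ z in {z : ℂ | c < ‖z‖}, f ‖z‖ = 2 * π * ∫ r in Ioi c, r * f r := by
  rw [← integral_indicator (measurableSet_lt measurable_const measurable_norm)]
  change ∫ z : ℂ, (Ioi c).indicator f ‖z‖ = _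
  rw [integral_fun_norm_addHaar volume, Complex.finrank_real_complex, measureReal_def,
    Complex.volume_ball]
  simp only [ENNReal.ofReal_one, one_pow, one_mul, ENNReal.coe_toReal, NNReal.coe_real_pi,
    Nat.add_one_sub_one, pow_one, smul_eq_mul, nsmul_eq_mul, Nat.cast_ofNat]
  simp_rw [← indicator_mul_right _ (fun y => y) f]
  rw [integral_indicator measurableSet_Ioi, Measure.restrict_restrict measurableSet_Ioi,
    Ioi_inter_Ioi, max_eq_left hc]
  ring

/-- Gaussian-type tail bound for the Bargmann monomials: for `k ≥ 0`, `R ≥ 1`,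
`∫_{|z| > √(k/π)+R} √(π^k/k!) |z|^k e^{-(π/2)|z|²} dz ≤ (2+2√k) e^{-πR²/2}`. -/
theorem stmt_2 (k : ℕ) (R : ℝ) (hR : 1 ≤ R) :
    (∫ z in {z : ℂ | Real.sqrt (k / π) + R < ‖z‖},
        Real.sqrt (π ^ k / k.factorial) * ‖z‖ ^ k *
          Real.exp (-(π / 2) * ‖z‖ ^ 2)) ≤
      (2 + 2 * Real.sqrt k) * Real.exp (-(π * R ^ 2) / 2) := by
  have ha : √(k / π) ≤ √k :=
    sqrt_le_sqrt (div_le_self k.cast_nonneg (by linarith [pi_gt_three]))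
  calc _ = 2 * π * ∫ r in Ioi (√(k / π) + R),
          r * (√(π ^ k / k !) * r ^ k * exp (-(π / 2) * r ^ 2)) :=
        setIntegral_norm_gt_eq_two_pi_mul
          (fun r => √(π ^ k / k !) * r ^ k * exp (-(π / 2) * r ^ 2)) (by positivity)
    _ ≤ 2 * π * ((1 + √(k / π)) * exp (-(π / 2) * R ^ 2) / π) :=
        mul_le_mul_of_nonneg_left
          (integral_Ioi_mul_sqrt_pow_div_factorial_mul_pow_mul_exp_le pi_pos hR k) (by positivity)
    _ = (2 + 2 * √(k / π)) * exp (-(π * R ^ 2) / 2) := by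
        field_simp
    _ ≤ (2 + 2 * √k) * exp (-(π * R ^ 2) / 2) := by gcongr
end

section
/- For every integer k ≥ 0 and every real number r ≥ 0 with r = √(k/π) + t for some t ≥ 0, one has √(π^k/k!) · r^k · e^{−(π/2) r²} ≤ e^{−π t²/2}. -/
/-!
After squaring, the claim is the bound `x^k e^{-x} / k! ≤ e^{-(√x - √k)²}` at `x = π r²`, for
which `√x - √k = √π t`. It combines `k^k / k! ≤ e^k` with `1 + u ≤ e^u` applied to
`u = √x / √k - 1`, raised to the power `2k`.
-/

open Real
open scoped Nat

lemma pow_two_mul_le_pow_mul_exp (k : ℕ) {s : ℝ} (hs : 0 ≤ s) :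
    s ^ (2 * k) ≤ (k : ℝ) ^ k * exp (2 * √k * s - 2 * k) := by
  rcases Nat.eq_zero_or_pos k with rfl | hk
  · simp
  have hu : 0 < √(k : ℝ) := sqrt_pos.2 (by exact_mod_cast hk)
  have hu2 : √(k : ℝ) ^ 2 = k := sq_sqrt (Nat.cast_nonneg k)
  have hratio : s / √k ≤ exp (s / √k - 1) := by linarith [add_one_le_exp (s / √k - 1)]
  calc s ^ (2 * k) = (√k ^ 2) ^ k * (s / √k) ^ (2 * k) := by
        rw [← pow_mul, ← mul_pow, mul_div_cancel₀ _ hu.ne']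
    _ ≤ (√k ^ 2) ^ k * exp (s / √k - 1) ^ (2 * k) := by gcongr
    _ = (k : ℝ) ^ k * exp (2 * √k * s - 2 * k) := by
        rw [hu2, ← exp_nat_mul]
        congr 2
        push_cast
        field_simp
        linear_combination (-s) * hu2

lemma pow_div_factorial_mul_exp_neg_le (k : ℕ) {x : ℝ} (hx : 0 ≤ x) :
    x ^ k / k ! * exp (-x) ≤ exp (-(√x - √k) ^ 2) := by
  have hfac : (k : ℝ) ^ k / k ! ≤ exp k := pow_div_factorial_le_exp _ (Nat.cast_nonneg k) k
  calc x ^ k / k ! * exp (-x) = √x ^ (2 * k) / k ! * exp (-x) := by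
        rw [pow_mul, sq_sqrt hx]
    _ ≤ (k : ℝ) ^ k * exp (2 * √k * √x - 2 * k) / k ! * exp (-x) := by
        gcongr; exact pow_two_mul_le_pow_mul_exp k (sqrt_nonneg x)
    _ = (k : ℝ) ^ k / k ! * exp (2 * √k * √x - 2 * k - x) := by
        rw [exp_sub _ x, exp_neg]; ring
    _ ≤ exp k * exp (2 * √k * √x - 2 * k - x) := by gcongr
    _ = exp (-(√x - √k) ^ 2) := by
        rw [← exp_add]
        congr 1
        linear_combination sq_sqrt hx + sq_sqrt (Nat.cast_nonneg (α := ℝ) k)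

/-- For `k ≥ 0`, `t ≥ 0` and `r = √(k/π) + t` we have
`√(π^k/k!) r^k e^{-(π/2) r²} ≤ e^{-π t²/2}`. -/
theorem stmt_4 (k : ℕ) (t : ℝ) (ht : 0 ≤ t) (r : ℝ)
    (hr : r = Real.sqrt (k / π) + t) :
    Real.sqrt (π ^ k / k.factorial) * r ^ k * Real.exp (-(π / 2) * r ^ 2) ≤
      Real.exp (-(π * t ^ 2) / 2) := by
  have hr0 : 0 ≤ r := hr ▸ by positivity
  have hsqrt : √(π * r ^ 2) - √k = √π * t := by
    rw [sqrt_mul pi_pos.le, sqrt_sq hr0, hr, mul_add, ← sqrt_mul pi_pos.le,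
      mul_div_cancel₀ _ pi_pos.ne']
    ring
  have hsq := pow_div_factorial_mul_exp_neg_le k (x := π * r ^ 2) (by positivity)
  rw [hsqrt, mul_pow √π t 2, sq_sqrt pi_pos.le] at hsq
  refine (pow_le_pow_iff_left₀ (by positivity) (by positivity) two_ne_zero).1 ?_
  calc (√(π ^ k / k !) * r ^ k * exp (-(π / 2) * r ^ 2)) ^ 2
      = (π * r ^ 2) ^ k / k ! * exp (-(π * r ^ 2)) := by
        rw [mul_pow, mul_pow, sq_sqrt (by positivity), ← exp_nat_mul]
        push_cast; ring_nf
    _ ≤ exp (-(π * t ^ 2)) := hsq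
    _ = exp (-(π * t ^ 2) / 2) ^ 2 := by rw [← exp_nat_mul]; push_cast; ring_nf
end
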